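/- (Generalized evolutionary NLS equation.) Let 𝔙 be a regular vessel with d = 2 and generalized NLS parameters σ1 = I, σ2 = diag(a,−a) with a ≠ 0, γ = [[γ11, γ12],[γ21, −γ11]], and write H_0(x,t) = [[h11, h12],[h21, h22]]. Then on Ω the entry h12 satisfies the generalized NLS equation 2a·∂_t h12 = i·∂_{xx} h12 − 2i·γ11·∂_x h12 + 2i·(2a·h12·h21 − γ21·h12 + γ12·h21)·(γ12 + 2a·h12). -/

import Mathlib

noncomputable section

open ContinuousLinearMap

/-- The coefficient space `ℂ^d`. -/
abbrev Ed (d : ℕ) : Type := EuclideanSpace ℂ (Fin d)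

/-- A `d × d` complex matrix viewed as a continuous linear map on `ℂ^d`. -/
def m2c {d : ℕ} (σ : Matrix (Fin d) (Fin d) ℂ) : Ed d →L[ℂ] Ed d :=
  Matrix.toEuclideanCLM (𝕜 := ℂ) σ

/-- A continuous linear map on `ℂ^d` viewed as a `d × d` complex matrix. -/
def c2m {d : ℕ} (T : Ed d →L[ℂ] Ed d) : Matrix (Fin d) (Fin d) ℂ :=
  (Matrix.toEuclideanCLM (𝕜 := ℂ)).symm T

/-- Partial derivative in the first (space) variable. -/
def pdx {M : Type*} [NormedAddCommGroup M] [NormedSpace ℝ M]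
    (F : ℝ × ℝ → M) (p : ℝ × ℝ) : M :=
  deriv (fun x => F (x, p.2)) p.1

/-- Partial derivative in the second (time) variable. -/
def pdt {M : Type*} [NormedAddCommGroup M] [NormedSpace ℝ M]
    (F : ℝ × ℝ → M) (p : ℝ × ℝ) : M :=
  deriv (fun t => F (p.1, t)) p.2

/-- Entrywise partial derivative in `x` of a matrix-valued function. -/
def pdxM {d : ℕ} (F : ℝ × ℝ → Matrix (Fin d) (Fin d) ℂ) (p : ℝ × ℝ) :
    Matrix (Fin d) (Fin d) ℂ :=
  Matrix.of fun i j => pdx (fun q => F q i j) p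

/-- Entrywise partial derivative in `t` of a matrix-valued function. -/
def pdtM {d : ℕ} (F : ℝ × ℝ → Matrix (Fin d) (Fin d) ℂ) (p : ℝ × ℝ) :
    Matrix (Fin d) (Fin d) ℂ :=
  Matrix.of fun i j => pdt (fun q => F q i j) p

/-- A regular vessel with inner (Krein/Hilbert) space `K` and coefficient space `ℂ^d`. -/
structure Vessel (K : Type*) [NormedAddCommGroup K] [InnerProductSpace ℂ K]
    [CompleteSpace K] (d : ℕ) where
  Ω : Set (ℝ × ℝ)
  hΩ : IsOpen Ω
  A : K →L[ℂ] K
  Aζ : K →L[ℂ] K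
  B : ℝ × ℝ → Ed d →L[ℂ] K
  C : ℝ × ℝ → K →L[ℂ] Ed d
  X : ℝ × ℝ → K →L[ℂ] K
  /-- pointwise inverse of `X` -/
  Xi : ℝ × ℝ → K →L[ℂ] K
  σ1 : Matrix (Fin d) (Fin d) ℂ
  σ2 : Matrix (Fin d) (Fin d) ℂ
  γ : Matrix (Fin d) (Fin d) ℂ
  γs : ℝ × ℝ → Matrix (Fin d) (Fin d) ℂ
  hσ1 : IsUnit σ1
  smoothB : ContDiffOn ℝ 2 B Ω
  smoothC : ContDiffOn ℝ 2 C Ω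
  smoothX : ContDiffOn ℝ 2 X Ω
  hXinv : ∀ p ∈ Ω, X p ∘L Xi p = (1 : K →L[ℂ] K) ∧ Xi p ∘L X p = (1 : K →L[ℂ] K)
  eqBx : ∀ p ∈ Ω,
    pdx B p ∘L m2c σ1 + A ∘L B p ∘L m2c σ2 + B p ∘L m2c γ = 0
  eqBt : ∀ p ∈ Ω, pdt B p = Complex.I • (A ∘L pdx B p)
  eqCx : ∀ p ∈ Ω,
    m2c σ1 ∘L pdx C p + m2c σ2 ∘L C p ∘L Aζ - m2c γ ∘L C p = 0
  eqCt : ∀ p ∈ Ω, pdt C p = (-Complex.I) • (pdx C p ∘L Aζ)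
  eqXx : ∀ p ∈ Ω, pdx X p = B p ∘L m2c σ2 ∘L C p
  eqXt : ∀ p ∈ Ω, pdt X p =
    Complex.I • (A ∘L B p ∘L m2c σ2 ∘L C p) -
      Complex.I • (B p ∘L m2c σ2 ∘L C p ∘L Aζ) +
      Complex.I • (B p ∘L m2c γ ∘L C p)
  eqLyap : ∀ p ∈ Ω, A ∘L X p + X p ∘L Aζ + B p ∘L m2c σ1 ∘L C p = 0
  eqLink : ∀ p ∈ Ω, γs p =
    γ + σ2 * c2m (C p ∘L Xi p ∘L B p) * σ1 - σ1 * c2m (C p ∘L Xi p ∘L B p) * σ2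

/-- The `n`-th moment `H_n = C 𝕏⁻¹ Aⁿ B` of a vessel, as a `d × d` matrix. -/
def Vessel.H {K : Type*} [NormedAddCommGroup K] [InnerProductSpace ℂ K]
    [CompleteSpace K] {d : ℕ} (V : Vessel K d) (n : ℕ) (p : ℝ × ℝ) :
    Matrix (Fin d) (Fin d) ℂ :=
  c2m (V.C p ∘L V.Xi p ∘L (V.A ^ n) ∘L V.B p)

/-!
With `σ1 = I`, the vessel equations for `B`, `C`, `𝕏` and the Lyapunov equation, used in the form
`Aζ 𝕏⁻¹ = -𝕏⁻¹ A - 𝕏⁻¹ B C 𝕏⁻¹`, close up into equations for the moments: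
`∂ₓ Hₙ = σ2 Hₙ₊₁ - Hₙ₊₁ σ2 + γ_* Hₙ - Hₙ γ` with `γ_* = γ + σ2 H₀ - H₀ σ2` (the linkage condition),
and `∂ₜ H₀ = i (∂ₓ H₁ + ∂ₓ H₀ · H₀)`.
For `σ2 = diag(a, -a)` the `(1,2)` entry of the `x`-equation reads
`∂ₓ h12 = 2a (H₁)₁₂ + (terms in H₀)`, and its diagonal entries give `∂ₓ h11 = -∂ₓ h22` as a
polynomial in `h12`, `h21`. Differentiating the `(1,2)` identity once more in `x` and eliminating
`∂ₓ (H₁)₁₂` with the `t`-equation leaves the NLS equation.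
-/

open ContinuousLinearMap Filter Topology

section Calculus

theorem HasDerivAt.clm_comp_of_isScalarTower {𝕜 𝕜' : Type*} [NontriviallyNormedField 𝕜]
    [NontriviallyNormedField 𝕜'] [NormedAlgebra 𝕜 𝕜'] {E F G : Type*}
    [NormedAddCommGroup E] [NormedSpace 𝕜 E] [NormedSpace 𝕜' E] [IsScalarTower 𝕜 𝕜' E]
    [NormedAddCommGroup F] [NormedSpace 𝕜 F] [NormedSpace 𝕜' F] [IsScalarTower 𝕜 𝕜' F]
    [NormedAddCommGroup G] [NormedSpace 𝕜 G] [NormedSpace 𝕜' G] [IsScalarTower 𝕜 𝕜' G]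
    {c : 𝕜 → F →L[𝕜'] G} {c' : F →L[𝕜'] G} {d : 𝕜 → E →L[𝕜'] F} {d' : E →L[𝕜'] F} {x : 𝕜}
    (hc : HasDerivAt c c' x) (hd : HasDerivAt d d' x) :
    HasDerivAt (fun y => (c y).comp (d y)) (c'.comp (d x) + (c x).comp d') x := by
  simpa [add_comm] using
    ((compL 𝕜' E F G).bilinearRestrictScalars 𝕜).hasDerivAt_of_bilinear (fun _ => hc) (fun _ => hd)

theorem HasDerivAt.of_eventually_inverse {𝕜 R : Type*} [NontriviallyNormedField 𝕜] [NormedRing R]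
    [HasSummableGeomSeries R] [NormedAlgebra 𝕜 R] {f g : 𝕜 → R} {f' : R} {x : 𝕜}
    (hf : HasDerivAt f f' x) (hfg : ∀ᶠ y in 𝓝 x, f y * g y = 1 ∧ g y * f y = 1) :
    HasDerivAt g (-(g x * f' * g x)) x := by
  obtain ⟨hfg₁, hfg₂⟩ := hfg.self_of_nhds
  let u : Rˣ := ⟨f x, g x, hfg₁, hfg₂⟩
  have hinv := (hasFDerivAt_ringInverse (𝕜 := 𝕜) u).comp_hasDerivAt x hf
  refine (hinv.congr_deriv ?_).congr_of_eventuallyEq ?_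
  · simp [u, mul_assoc]
  · filter_upwards [hfg] with y hy
    exact (Ring.inverse_unit ⟨f y, g y, hy.1, hy.2⟩).symm

variable {M : Type*} [NormedAddCommGroup M] [NormedSpace ℝ M] {F : ℝ × ℝ → M} {p : ℝ × ℝ}

theorem DifferentiableAt.hasDerivAt_pdx (h : DifferentiableAt ℝ F p) :
    HasDerivAt (fun x => F (x, p.2)) (pdx F p) p.1 :=
  (h.comp p.1 (differentiableAt_id.prodMk (differentiableAt_const _))).hasDerivAt

theorem DifferentiableAt.hasDerivAt_pdt (h : DifferentiableAt ℝ F p) :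
    HasDerivAt (fun t => F (p.1, t)) (pdt F p) p.2 :=
  (h.comp p.2 ((differentiableAt_const _).prodMk differentiableAt_id)).hasDerivAt

theorem HasDerivAt.pdx_eq {D : M} (h : HasDerivAt (fun x => F (x, p.2)) D p.1) : pdx F p = D :=
  h.deriv

theorem HasDerivAt.pdt_eq {D : M} (h : HasDerivAt (fun t => F (p.1, t)) D p.2) : pdt F p = D :=
  h.deriv

theorem IsOpen.eventually_mem_x {Ω : Set (ℝ × ℝ)} (hΩ : IsOpen Ω) (hp : p ∈ Ω) :
    ∀ᶠ x in 𝓝 p.1, (x, p.2) ∈ Ω :=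
  (continuous_id.prodMk continuous_const).continuousAt.preimage_mem_nhds (hΩ.mem_nhds hp)

theorem IsOpen.eventually_mem_t {Ω : Set (ℝ × ℝ)} (hΩ : IsOpen Ω) (hp : p ∈ Ω) :
    ∀ᶠ t in 𝓝 p.2, (p.1, t) ∈ Ω :=
  (continuous_const.prodMk continuous_id).continuousAt.preimage_mem_nhds (hΩ.mem_nhds hp)

end Calculus

section MatrixOperator

variable {d : ℕ}

theorem m2c_one : m2c (1 : Matrix (Fin d) (Fin d) ℂ) = 1 := map_one _

theorem c2m_m2c (σ : Matrix (Fin d) (Fin d) ℂ) : c2m (m2c σ) = σ :=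
  StarAlgEquiv.symm_apply_apply _ _

theorem c2m_add (S T : Ed d →L[ℂ] Ed d) : c2m (S + T) = c2m S + c2m T := map_add _ _ _

theorem c2m_mul (S T : Ed d →L[ℂ] Ed d) : c2m (S * T) = c2m S * c2m T := map_mul _ _ _

theorem c2m_smul (z : ℂ) (T : Ed d →L[ℂ] Ed d) : c2m (z • T) = z • c2m T := map_smul _ _ _

theorem HasDerivAt.c2m_apply {Φ : ℝ → Ed d →L[ℂ] Ed d} {D : Ed d →L[ℂ] Ed d} {x : ℝ}
    (h : HasDerivAt Φ D x) (i j : Fin d) :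
    HasDerivAt (fun y => c2m (Φ y) i j) (c2m D i j) x := by
  let entry : (Ed d →L[ℂ] Ed d) →L[ℂ] ℂ := LinearMap.toContinuousLinearMap
    (Matrix.entryLinearMap ℂ ℂ i j ∘ₗ
      (Matrix.toEuclideanCLM (𝕜 := ℂ)).symm.toAlgEquiv.toLinearEquiv.toLinearMap)
  have h_entry := (entry.restrictScalars ℝ).hasFDerivAt.comp_hasDerivAt x h
  exact h_entry

end MatrixOperator

namespace Vessel

variable {K : Type*} [NormedAddCommGroup K] [InnerProductSpace ℂ K] [CompleteSpace K] {d : ℕ}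
  (V : Vessel K d) {p : ℝ × ℝ}

def moment (n : ℕ) (q : ℝ × ℝ) : Ed d →L[ℂ] Ed d :=
  V.C q ∘L V.Xi q ∘L (V.A ^ n) ∘L V.B q

theorem H_eq_c2m_moment (n : ℕ) (q : ℝ × ℝ) : V.H n q = c2m (V.moment n q) := rfl

def dxH (n : ℕ) (q : ℝ × ℝ) : Matrix (Fin d) (Fin d) ℂ :=
  V.σ2 * V.H (n + 1) q - V.H (n + 1) q * V.σ2 + V.γs q * V.H n q - V.H n q * V.γ

variable {V}

theorem pdx_B_of_σ1_eq_one (hσ1 : V.σ1 = 1) (hp : p ∈ V.Ω) :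
    pdx V.B p = -(V.A ∘L V.B p ∘L m2c V.σ2) - V.B p ∘L m2c V.γ := by
  have h := V.eqBx p hp
  rw [hσ1, m2c_one, one_def, comp_id] at h
  rw [← sub_eq_zero, ← h]
  abel

theorem pdx_C_of_σ1_eq_one (hσ1 : V.σ1 = 1) (hp : p ∈ V.Ω) :
    pdx V.C p = m2c V.γ ∘L V.C p - m2c V.σ2 ∘L V.C p ∘L V.Aζ := by
  have h := V.eqCx p hp
  rw [hσ1, m2c_one, one_def, id_comp] at h
  rw [← sub_eq_zero, ← h]
  abel

theorem Aζ_comp_Xi_comp (hσ1 : V.σ1 = 1) (hp : p ∈ V.Ω) {E : Type*} [NormedAddCommGroup E]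
    [NormedSpace ℂ E] (w : E →L[ℂ] K) :
    V.Aζ ∘L V.Xi p ∘L w = -(V.Xi p ∘L V.A ∘L w) - V.Xi p ∘L V.B p ∘L V.C p ∘L V.Xi p ∘L w := by
  obtain ⟨hXY, hYX⟩ := V.hXinv p hp
  have hXAζ : V.X p ∘L V.Aζ = -(V.A ∘L V.X p) - V.B p ∘L V.C p := by
    have h := V.eqLyap p hp
    rw [hσ1, m2c_one, one_def, id_comp] at h
    rw [← sub_eq_zero, ← h]
    abel
  calc V.Aζ ∘L V.Xi p ∘L w = V.Xi p ∘L (V.X p ∘L V.Aζ) ∘L V.Xi p ∘L w := by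
        simp only [← comp_assoc, hYX, one_def, id_comp]
    _ = _ := by
        rw [hXAζ]
        simp only [sub_comp, neg_comp, comp_sub, comp_neg, comp_assoc]
        rw [← comp_assoc (V.X p), hXY, one_def, id_comp]

theorem hasDerivAt_Xi_x (hp : p ∈ V.Ω) :
    HasDerivAt (fun x => V.Xi (x, p.2)) (-(V.Xi p ∘L pdx V.X p ∘L V.Xi p)) p.1 := by
  have hX := ((V.smoothX.differentiableOn (by norm_num)).differentiableAt
    (V.hΩ.mem_nhds hp)).hasDerivAt_pdx
  simpa only [mul_def, comp_assoc] using
    hX.of_eventually_inverse ((V.hΩ.eventually_mem_x hp).mono fun x hx => V.hXinv _ hx)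

theorem hasDerivAt_Xi_t (hp : p ∈ V.Ω) :
    HasDerivAt (fun t => V.Xi (p.1, t)) (-(V.Xi p ∘L pdt V.X p ∘L V.Xi p)) p.2 := by
  have hX := ((V.smoothX.differentiableOn (by norm_num)).differentiableAt
    (V.hΩ.mem_nhds hp)).hasDerivAt_pdt
  simpa only [mul_def, comp_assoc] using
    hX.of_eventually_inverse ((V.hΩ.eventually_mem_t hp).mono fun t ht => V.hXinv _ ht)

theorem γs_eq (hσ1 : V.σ1 = 1) (hp : p ∈ V.Ω) :
    V.γs p = V.γ + V.σ2 * V.H 0 p - V.H 0 p * V.σ2 := by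
  rw [V.eqLink p hp, hσ1, mul_one, one_mul, H, pow_zero, one_def, id_comp]

theorem m2c_dxH (hσ1 : V.σ1 = 1) (hp : p ∈ V.Ω) (n : ℕ) :
    m2c (V.dxH n p) = m2c V.σ2 ∘L V.moment (n + 1) p - V.moment (n + 1) p ∘L m2c V.σ2 +
      (m2c V.γ + m2c V.σ2 ∘L V.moment 0 p - V.moment 0 p ∘L m2c V.σ2) ∘L V.moment n p -
      V.moment n p ∘L m2c V.γ := by
  simp only [dxH, γs_eq hσ1 hp, H_eq_c2m_moment, m2c, c2m, map_add, map_sub, map_mul,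
    StarAlgEquiv.apply_symm_apply, mul_def]

theorem hasDerivAt_moment_x (hσ1 : V.σ1 = 1) (hp : p ∈ V.Ω) (n : ℕ) :
    HasDerivAt (fun x => V.moment n (x, p.2)) (m2c (V.dxH n p)) p.1 := by
  have hB := ((V.smoothB.differentiableOn (by norm_num)).differentiableAt
    (V.hΩ.mem_nhds hp)).hasDerivAt_pdx
  have hC := ((V.smoothC.differentiableOn (by norm_num)).differentiableAt
    (V.hΩ.mem_nhds hp)).hasDerivAt_pdx
  have h := hC.clm_comp_of_isScalarTower ((hasDerivAt_Xi_x hp).clm_comp_of_isScalarTower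
    ((hasDerivAt_const _ (V.A ^ n)).clm_comp_of_isScalarTower hB))
  refine h.congr_deriv ?_
  rw [m2c_dxH hσ1 hp, pdx_C_of_σ1_eq_one hσ1 hp, pdx_B_of_σ1_eq_one hσ1 hp, V.eqXx p hp]
  have hA_pow_comm (w : Ed d →L[ℂ] K) : (V.A ^ n) ∘L V.A ∘L w = V.A ∘L (V.A ^ n) ∘L w := by
    rw [← comp_assoc, ← comp_assoc, ← mul_def, ← mul_def, pow_mul_comm']
  simp only [moment, pow_succ', pow_zero, mul_def, one_def, id_comp, Prod.mk.eta, zero_comp,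
    zero_add, comp_add, add_comp, comp_sub, sub_comp, comp_neg, neg_comp, comp_assoc,
    Aζ_comp_Xi_comp hσ1 hp, hA_pow_comm]
  abel

theorem hasDerivAt_moment_zero_t (hσ1 : V.σ1 = 1) (hp : p ∈ V.Ω) :
    HasDerivAt (fun t => V.moment 0 (p.1, t))
      (Complex.I • (m2c (V.dxH 1 p) + m2c (V.dxH 0 p) ∘L V.moment 0 p)) p.2 := by
  have hB := ((V.smoothB.differentiableOn (by norm_num)).differentiableAt
    (V.hΩ.mem_nhds hp)).hasDerivAt_pdt
  have hC := ((V.smoothC.differentiableOn (by norm_num)).differentiableAt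
    (V.hΩ.mem_nhds hp)).hasDerivAt_pdt
  have h := hC.clm_comp_of_isScalarTower ((hasDerivAt_Xi_t hp).clm_comp_of_isScalarTower
    ((hasDerivAt_const _ (V.A ^ 0)).clm_comp_of_isScalarTower hB))
  refine h.congr_deriv ?_
  rw [m2c_dxH hσ1 hp, m2c_dxH hσ1 hp, V.eqCt p hp, V.eqBt p hp, V.eqXt p hp,
    pdx_C_of_σ1_eq_one hσ1 hp, pdx_B_of_σ1_eq_one hσ1 hp]
  -- `∂ₜ C` brings in `C Aζ Aζ 𝕏⁻¹`; simp applies the Lyapunov identity to it twice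
  simp only [moment, Prod.mk.eta, pow_succ', pow_zero, mul_def, one_def, id_comp, comp_id,
    zero_comp, zero_add, comp_add, add_comp, comp_sub, sub_comp, comp_neg, neg_comp, comp_smul,
    smul_comp, smul_add, smul_sub, smul_neg, comp_assoc, Aζ_comp_Xi_comp hσ1 hp]
  module

theorem hasDerivAt_H_x (hσ1 : V.σ1 = 1) (hp : p ∈ V.Ω) (n : ℕ) (i j : Fin d) :
    HasDerivAt (fun x => V.H n (x, p.2) i j) (V.dxH n p i j) p.1 := by
  have h := (hasDerivAt_moment_x hσ1 hp n).c2m_apply i j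
  rwa [c2m_m2c] at h

theorem hasDerivAt_H_zero_t (hσ1 : V.σ1 = 1) (hp : p ∈ V.Ω) (i j : Fin d) :
    HasDerivAt (fun t => V.H 0 (p.1, t) i j)
      ((Complex.I • (V.dxH 1 p + V.dxH 0 p * V.H 0 p)) i j) p.2 := by
  have h := (hasDerivAt_moment_zero_t hσ1 hp).c2m_apply i j
  rwa [← mul_def, c2m_smul, c2m_add, c2m_mul, c2m_m2c, c2m_m2c, ← H_eq_c2m_moment] at h

section NLS

variable {V : Vessel K 2} {a γ11 γ12 γ21 : ℂ}

theorem dxH_zero_diag_of_nls (hσ1 : V.σ1 = 1) (hσ2 : V.σ2 = !![a, 0; 0, -a])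
    (hγ : V.γ = !![γ11, γ12; γ21, -γ11]) (hp : p ∈ V.Ω) :
    V.dxH 0 p 0 0 = 2 * a * V.H 0 p 0 1 * V.H 0 p 1 0 - γ21 * V.H 0 p 0 1 + γ12 * V.H 0 p 1 0 ∧
    V.dxH 0 p 1 1 =
      -(2 * a * V.H 0 p 0 1 * V.H 0 p 1 0 - γ21 * V.H 0 p 0 1 + γ12 * V.H 0 p 1 0) := by
  simp only [dxH, γs_eq hσ1 hp, hσ2, hγ]
  constructor <;>
  · simp only [Matrix.sub_apply, Matrix.add_apply, Matrix.mul_apply, Fin.sum_univ_two,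
      Matrix.of_apply, Matrix.cons_val', Matrix.cons_val_zero, Matrix.cons_val_one,
      Matrix.cons_val_fin_one]
    ring

theorem pdx_H_zero_01_of_nls (hσ1 : V.σ1 = 1) (hσ2 : V.σ2 = !![a, 0; 0, -a])
    (hγ : V.γ = !![γ11, γ12; γ21, -γ11]) (hp : p ∈ V.Ω) :
    pdx (fun q => V.H 0 q 0 1) p = 2 * a * V.H 1 p 0 1 + 2 * γ11 * V.H 0 p 0 1 +
      (γ12 + 2 * a * V.H 0 p 0 1) * V.H 0 p 1 1 - γ12 * V.H 0 p 0 0 := by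
  rw [(hasDerivAt_H_x hσ1 hp 0 0 1).pdx_eq]
  simp only [dxH, γs_eq hσ1 hp, hσ2, hγ]
  simp only [Matrix.sub_apply, Matrix.add_apply, Matrix.mul_apply, Fin.sum_univ_two,
      Matrix.of_apply, Matrix.cons_val', Matrix.cons_val_zero, Matrix.cons_val_one,
      Matrix.cons_val_fin_one]
  ring

end NLS

end Vessel

open Vessel in
theorem generalized_NLS_equation_general {K : Type*} [NormedAddCommGroup K]
    [InnerProductSpace ℂ K] [CompleteSpace K]
    (V : Vessel K 2) (a γ11 γ12 γ21 : ℂ)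
    (hσ1 : V.σ1 = 1) (hσ2 : V.σ2 = !![a, 0; 0, -a])
    (hγ : V.γ = !![γ11, γ12; γ21, -γ11])
    (h12 h21 : ℝ × ℝ → ℂ)
    (hh12 : h12 = fun q => V.H 0 q 0 1) (hh21 : h21 = fun q => V.H 0 q 1 0) :
    ∀ p ∈ V.Ω,
      2 * a * pdt h12 p =
        Complex.I * pdx (pdx h12) p - 2 * Complex.I * γ11 * pdx h12 p +
          2 * Complex.I * (2 * a * h12 p * h21 p - γ21 * h12 p + γ12 * h21 p) *
            (γ12 + 2 * a * h12 p) := by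
  intro p hp
  subst hh12 hh21
  have hx (n : ℕ) (i j : Fin 2) := hasDerivAt_H_x hσ1 hp n i j
  obtain ⟨h00, h11⟩ := dxH_zero_diag_of_nls hσ1 hσ2 hγ hp
  have h_t : pdt (fun q => V.H 0 q 0 1) p = Complex.I * (V.dxH 1 p 0 1 +
      V.dxH 0 p 0 0 * V.H 0 p 0 1 + V.dxH 0 p 0 1 * V.H 0 p 1 1) := by
    rw [(hasDerivAt_H_zero_t hσ1 hp 0 1).pdt_eq]
    simp only [Matrix.smul_apply, Matrix.add_apply, Matrix.mul_apply, Fin.sum_univ_two,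
      smul_eq_mul]
    ring
  have h_xx : pdx (pdx fun q => V.H 0 q 0 1) p = 2 * a * V.dxH 1 p 0 1 +
      2 * γ11 * V.dxH 0 p 0 1 + (2 * a * V.dxH 0 p 0 1 * V.H 0 p 1 1 +
        (γ12 + 2 * a * V.H 0 p 0 1) * V.dxH 0 p 1 1) - γ12 * V.dxH 0 p 0 0 := by
    have hD := ((((hx 1 0 1).const_mul (2 * a)).add ((hx 0 0 1).const_mul (2 * γ11))).add
      (((hx 0 0 1).const_mul (2 * a)).const_add γ12 |>.mul (hx 0 1 1))).sub
      ((hx 0 0 0).const_mul γ12)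
    refine (hD.congr_of_eventuallyEq ?_).pdx_eq
    filter_upwards [V.hΩ.eventually_mem_x hp] with x hxΩ
    exact pdx_H_zero_01_of_nls hσ1 hσ2 hγ hxΩ
  rw [h_t, h_xx, (hx 0 0 1).pdx_eq, h00, h11]
  ring

/-- the `(1,2)` entry of the first moment of a vessel with generalized
NLS parameters satisfies the generalized evolutionary NLS equation. -/
theorem generalized_NLS_equation {K : Type*} [NormedAddCommGroup K]
    [InnerProductSpace ℂ K] [CompleteSpace K]
    (V : Vessel K 2) (a γ11 γ12 γ21 : ℂ) (ha : a ≠ 0)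
    (hσ1 : V.σ1 = 1) (hσ2 : V.σ2 = !![a, 0; 0, -a])
    (hγ : V.γ = !![γ11, γ12; γ21, -γ11])
    (h12 h21 : ℝ × ℝ → ℂ)
    (hh12 : h12 = fun q => V.H 0 q 0 1) (hh21 : h21 = fun q => V.H 0 q 1 0) :
    ∀ p ∈ V.Ω,
      2 * a * pdt h12 p =
        Complex.I * pdx (pdx h12) p - 2 * Complex.I * γ11 * pdx h12 p +
          2 * Complex.I * (2 * a * h12 p * h21 p - γ21 * h12 p + γ12 * h21 p) *
            (γ12 + 2 * a * h12 p) :=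
  generalized_NLS_equation_general V a γ11 γ12 γ21 hσ1 hσ2 hγ h12 h21 hh12 hh21
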